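/- Let P > 3 be an integer and define g(x) = (1 − x)² + (P − 1)·x·(1 − x + log x) for x ∈ (0,1). Then there exists a unique x* ∈ (0,1) such that g(x) > 0 for all x ∈ (0, x*) and g(x) < 0 for all x ∈ (x*, 1); in particular g(x*) = 0. -/

import Mathlib

/-!
Write `c = P - 1` and `g c x = x * h c x` with `h c x = (1 - x)^2 / x + c (1 - x + log x)`.
Then `h' = (1 - x)((c - 1) x - 1) / x^2`, so for `c > 2` the function `h` decreases on
`(0, 1/(c-1)]` and increases on `[1/(c-1), 1]` up to `h 1 = 0`; in particular `g < 0` at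
`1/(c-1)`. Since `x log x → 0`, `g` is continuous at `0` with `g 0 = 1`, and the intermediate
value theorem gives a zero `x*` of `h` in `(0, 1/(c-1))`, which the monotonicity of `h` makes
the only sign change of `g` on `(0, 1)`.
-/

open Set Real

namespace DEO

noncomputable def g (c x : ℝ) : ℝ := (1 - x) ^ 2 + c * x * (1 - x + log x)

noncomputable def h (c x : ℝ) : ℝ := (1 - x) ^ 2 / x + c * (1 - x + log x)

variable {c : ℝ}

theorem g_eq_mul_h {x : ℝ} (hx : 0 < x) : g c x = x * h c x := by
  unfold g h
  field_simp

theorem continuous_g : Continuous (g c) := by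
  have : g c = fun x => (1 - x) ^ 2 + c * x * (1 - x) + c * (x * log x) := by
    ext x; unfold g; ring
  rw [this]
  fun_prop

theorem g_zero : g c 0 = 1 := by simp [g]

theorem h_one : h c 1 = 0 := by simp [h]

theorem hasDerivAt_h {x : ℝ} (hx : 0 < x) :
    HasDerivAt (h c) ((1 - x) * ((c - 1) * x - 1) / x ^ 2) x := by
  have hsq : HasDerivAt (fun y : ℝ => (1 - y) ^ 2) (2 * (1 - x) * (-1)) x := by
    simpa using ((hasDerivAt_id x).const_sub 1).fun_pow 2
  have hlog : HasDerivAt (fun y : ℝ => 1 - y + log y) (-1 + x⁻¹) x := by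
    simpa using ((hasDerivAt_id x).const_sub 1).fun_add (hasDerivAt_log hx.ne')
  refine ((hsq.div (hasDerivAt_id x) hx.ne').fun_add (hlog.const_mul c)).congr_deriv ?_
  simp only [id]
  field_simp
  ring

theorem continuousOn_h {s : Set ℝ} (hs : s ⊆ Ioi 0) : ContinuousOn (h c) s :=
  fun _ hx => (hasDerivAt_h (hs hx)).continuousAt.continuousWithinAt

theorem strictAntiOn_h (hc : 2 ≤ c) : StrictAntiOn (h c) (Ioc 0 (c - 1)⁻¹) := by
  have hc1 : 0 < c - 1 := by linarith
  refine strictAntiOn_of_deriv_neg (convex_Ioc _ _) (continuousOn_h fun _ hx => hx.1) ?_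
  intro x hx
  rw [interior_Ioc] at hx
  obtain ⟨hx0, hxm⟩ := hx
  have hlt : (c - 1) * x < 1 := by
    simpa [mul_inv_cancel₀ hc1.ne'] using mul_lt_mul_of_pos_left hxm hc1
  have hm : (c - 1)⁻¹ ≤ 1 := inv_le_one_of_one_le₀ (by linarith)
  rw [(hasDerivAt_h hx0).deriv]
  exact div_neg_of_neg_of_pos (mul_neg_of_pos_of_neg (by linarith) (by linarith)) (by positivity)

theorem strictMonoOn_h (hc : 1 < c) : StrictMonoOn (h c) (Icc (c - 1)⁻¹ 1) := by
  have hc1 : 0 < c - 1 := by linarith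
  have hm : 0 < (c - 1)⁻¹ := inv_pos.2 hc1
  refine strictMonoOn_of_deriv_pos (convex_Icc _ _)
    (continuousOn_h fun _ hx => hm.trans_le hx.1) ?_
  intro x hx
  rw [interior_Icc] at hx
  obtain ⟨hmx, hx1⟩ := hx
  have hgt : 1 < (c - 1) * x := (inv_lt_iff_one_lt_mul₀' hc1).1 hmx
  have hx0 : 0 < x := hm.trans hmx
  rw [(hasDerivAt_h hx0).deriv]
  exact div_pos (mul_pos (by linarith) (by linarith)) (by positivity)

theorem h_neg_of_mem_Ico (hc : 1 < c) {x : ℝ} (hx : x ∈ Ico (c - 1)⁻¹ 1) : h c x < 0 :=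
  h_one (c := c) ▸ strictMonoOn_h hc ⟨hx.1, hx.2.le⟩ ⟨hx.1.trans hx.2.le, le_rfl⟩ hx.2

theorem exists_h_eq_zero (hc : 2 < c) : ∃ xs ∈ Ioo 0 (c - 1)⁻¹, h c xs = 0 := by
  have hm : (c - 1)⁻¹ < 1 := inv_lt_one_of_one_lt₀ (by linarith)
  have hm0 : 0 < (c - 1)⁻¹ := inv_pos.2 (by linarith)
  have hgm : g c (c - 1)⁻¹ < 0 := by
    rw [g_eq_mul_h hm0]
    exact mul_neg_of_pos_of_neg hm0 (h_neg_of_mem_Ico (by linarith) ⟨le_rfl, hm⟩)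
  obtain ⟨xs, hxs, hgxs⟩ := intermediate_value_Ioo' hm0.le continuous_g.continuousOn
    ⟨hgm, g_zero (c := c) ▸ one_pos⟩
  refine ⟨xs, hxs, ?_⟩
  rw [g_eq_mul_h hxs.1] at hgxs
  exact (mul_eq_zero.1 hgxs).resolve_left hxs.1.ne'

theorem eq_of_pos_on_Ioo_of_eq_zero {f : ℝ → ℝ} {a y z : ℝ} (hay : a < y) (haz : a < z)
    (hy : ∀ x ∈ Ioo a y, f x > 0) (hz : ∀ x ∈ Ioo a z, f x > 0) (hfy : f y = 0)
    (hfz : f z = 0) : y = z := by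
  rcases lt_trichotomy y z with hyz | hyz | hyz
  · exact absurd hfy (hz y ⟨hay, hyz⟩).ne'
  · exact hyz
  · exact absurd hfz (hy z ⟨haz, hyz⟩).ne'

theorem existsUnique_sign_change (hc : 2 < c) :
    ∃! xs, xs ∈ Ioo (0 : ℝ) 1 ∧ (∀ x ∈ Ioo 0 xs, g c x > 0) ∧
      (∀ x ∈ Ioo xs 1, g c x < 0) ∧ g c xs = 0 := by
  obtain ⟨xs, ⟨hxs0, hxsm⟩, hhxs⟩ := exists_h_eq_zero hc
  have hm : (c - 1)⁻¹ < 1 := inv_lt_one_of_one_lt₀ (by linarith)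
  have hanti := strictAntiOn_h hc.le
  have hpos : ∀ x ∈ Ioo 0 xs, g c x > 0 := fun x hx => by
    rw [g_eq_mul_h hx.1]
    exact mul_pos hx.1 (hhxs ▸ hanti ⟨hx.1, (hx.2.trans hxsm).le⟩ ⟨hxs0, hxsm.le⟩ hx.2)
  have hneg : ∀ x ∈ Ioo xs 1, g c x < 0 := fun x hx => by
    have hx0 : 0 < x := hxs0.trans hx.1
    rw [g_eq_mul_h hx0]
    refine mul_neg_of_pos_of_neg hx0 ?_
    rcases le_or_gt x (c - 1)⁻¹ with hxm | hxm
    · exact hhxs ▸ hanti ⟨hxs0, hxsm.le⟩ ⟨hx0, hxm⟩ hx.1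
    · exact h_neg_of_mem_Ico (by linarith) ⟨hxm.le, hx.2⟩
  have hzero : g c xs = 0 := by rw [g_eq_mul_h hxs0, hhxs, mul_zero]
  refine ⟨xs, ⟨⟨hxs0, hxsm.trans hm⟩, hpos, hneg, hzero⟩, ?_⟩
  rintro y ⟨hy, hypos, -, hyzero⟩
  exact eq_of_pos_on_Ioo_of_eq_zero hy.1 hxs0 hypos hpos hyzero hzero

end DEO

/-- Lemma 3 (Uniqueness of the solution) of the paper: for `P > 3`, the function
`g(x) = (1-x)^2 + (P-1) x (1 - x + log x)` has a unique sign-change point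
`x* ∈ (0,1)`, with `g > 0` on `(0, x*)`, `g < 0` on `(x*, 1)`, and `g(x*) = 0`. -/
theorem deo_g_unique_sign_change (P : ℕ) (hP : 3 < P) :
    let g : ℝ → ℝ := fun x => (1 - x) ^ 2 + ((P : ℝ) - 1) * x * (1 - x + Real.log x)
    ∃! xstar, xstar ∈ Set.Ioo (0 : ℝ) 1 ∧
      (∀ x ∈ Set.Ioo (0 : ℝ) xstar, g x > 0) ∧
      (∀ x ∈ Set.Ioo xstar (1 : ℝ), g x < 0) ∧
      g xstar = 0 := by
  have hP' : (3 : ℝ) < P := by exact_mod_cast hP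
  exact DEO.existsUnique_sign_change (c := (P : ℝ) - 1) (by linarith)
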